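/- arXiv:1202.6303 — 2 statements merged into one kernel-verified Lean document; each statement's English description precedes it below -/
import Mathlib

section
/- Let L be a positive integer and a₁, a₂ ∈ SL(2,ℤ) with a₁ ≡ a₂ (mod L) entrywise. For a ∈ SL(2,ℤ) let σ_a : T(L) → T(L) be the permutation defined by SL(2,ℤ)·A(L,m,k)·a = SL(2,ℤ)·A(L, σ_a(m,k)). Then σ_{a₁} = σ_{a₂}; i.e., for every (m,k) ∈ T(L), σ_{a₁}(m,k) = σ_{a₂}(m,k). -/
open Matrix

/-- The index set `T(L) = {(m,k) : m ∣ L, m > 0, 0 ≤ k < L/m}`. -/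
def heckeIndex (L : ℕ) : Set (ℕ × ℕ) :=
  {p | p.1 ∣ L ∧ 0 < p.1 ∧ p.2 < L / p.1}

/-- The Hecke matrix `A(L,m,k) = L^{-1/2} · [[m, k], [0, L/m]]` as a real matrix. -/
noncomputable def heckeMat (L m k : ℕ) : Matrix (Fin 2) (Fin 2) ℝ :=
  (Real.sqrt (L : ℝ))⁻¹ • !![(m : ℝ), (k : ℝ); 0, (L : ℝ) / (m : ℝ)]

/-- The left coset `SL(2,ℤ)·x` of a real matrix `x`. -/
def slCoset (x : Matrix (Fin 2) (Fin 2) ℝ) : Set (Matrix (Fin 2) (Fin 2) ℝ) :=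
  {y | ∃ γ : Matrix.SpecialLinearGroup (Fin 2) ℤ,
    y = (γ : Matrix (Fin 2) (Fin 2) ℤ).map (Int.cast : ℤ → ℝ) * x}

/-! If `a₁ ≡ a₂ (mod L)`, then `b = a₁ a₂⁻¹ = 1 + L c` for an integral matrix `c`. For the integral
matrix `M = [[m, k], [0, L/m]]`, of determinant `L`, the conjugate `M b M⁻¹ = 1 + M c adj(M)` is again
in `SL(2,ℤ)`, so `A(L,m,k) a₁` and `A(L,m,k) a₂` lie in the same coset. The cosets `SL(2,ℤ) A(L,m,k)`,
`(m,k) ∈ T(L)`, are pairwise distinct by uniqueness of the Hermite normal form, hence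
`σ_{a₁}(m,k) = σ_{a₂}(m,k)`. -/

lemma Matrix.map_intCast_mul {n : Type*} [Fintype n] (A B : Matrix n n ℤ) :
    (A * B).map (Int.cast : ℤ → ℝ) = A.map Int.cast * B.map Int.cast :=
  Matrix.map_mul (f := Int.castRingHom ℝ)

namespace Matrix.SpecialLinearGroup

variable {n : Type*} [Fintype n] [DecidableEq n]

lemma exists_mul_eq_mul_of_eq_one_add_det_smul (M : Matrix n n ℤ) (hM : M.det ≠ 0)
    (b : SpecialLinearGroup n ℤ) (c : Matrix n n ℤ) (hb : (b : Matrix n n ℤ) = 1 + M.det • c) :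
    ∃ γ : SpecialLinearGroup n ℤ, (γ : Matrix n n ℤ) * M = M * b := by
  set γ : Matrix n n ℤ := 1 + M * c * M.adjugate
  have hγ : γ * M = M * b := by
    rw [hb, add_mul, one_mul, mul_assoc, adjugate_mul, Matrix.mul_smul, mul_one, mul_add, mul_one,
      Matrix.mul_smul]
  have hdet : γ.det = 1 := by
    have := congrArg det hγ
    rw [det_mul, det_mul, b.2, mul_one] at this
    exact mul_right_cancel₀ hM (this.trans (one_mul _).symm)
  exact ⟨⟨γ, hdet⟩, hγ⟩

lemma exists_mul_mul_eq_mul_of_dvd_sub (M : Matrix n n ℤ) (hM : M.det ≠ 0)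
    (a₁ a₂ : SpecialLinearGroup n ℤ)
    (h : ∀ i j, M.det ∣ (a₁ : Matrix n n ℤ) i j - (a₂ : Matrix n n ℤ) i j) :
    ∃ γ : SpecialLinearGroup n ℤ, (γ : Matrix n n ℤ) * M * a₂ = M * a₁ := by
  choose c hc using h
  have ha₁ : (a₁ : Matrix n n ℤ) = a₂ + M.det • of c := by
    ext i j
    simp [← hc]
  obtain ⟨γ, hγ⟩ := exists_mul_eq_mul_of_eq_one_add_det_smul M hM (a₁ * a₂⁻¹)
      (of c * ((a₂⁻¹ : SpecialLinearGroup n ℤ) : Matrix n n ℤ)) <| by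
    rw [coe_mul, ha₁, add_mul, ← coe_mul, mul_inv_cancel, coe_one, smul_mul]
  refine ⟨γ, ?_⟩
  rw [hγ, mul_assoc, ← coe_mul, inv_mul_cancel_right]

lemma upperTriangular_eq_of_eq_mul (γ : SpecialLinearGroup (Fin 2) ℤ)
    {m₁ k₁ n₁ m₂ k₂ n₂ : ℤ} (hm₁ : 0 < m₁) (hm₂ : 0 < m₂) (hk₁ : 0 ≤ k₁) (hkn₁ : k₁ < n₁)
    (hk₂ : 0 ≤ k₂) (hkn₂ : k₂ < n₂)
    (h : !![m₁, k₁; 0, n₁] = (γ : Matrix (Fin 2) (Fin 2) ℤ) * !![m₂, k₂; 0, n₂]) :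
    m₁ = m₂ ∧ k₁ = k₂ := by
  set g : Matrix (Fin 2) (Fin 2) ℤ := ↑γ
  have hdet : g 0 0 * g 1 1 - g 0 1 * g 1 0 = 1 := by rw [← det_fin_two]; exact γ.2
  obtain ⟨⟨hm, hk⟩, hc, hn⟩ : (m₁ = g 0 0 * m₂ ∧ k₁ = g 0 0 * k₂ + g 0 1 * n₂) ∧
      0 = g 1 0 * m₂ ∧ n₁ = g 1 0 * k₂ + g 1 1 * n₂ := by
    rw [eta_fin_two g, mul_fin_two] at h
    simpa [← Matrix.ext_iff, Fin.forall_fin_two] using h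
  have hc0 : g 1 0 = 0 := (mul_eq_zero.1 hc.symm).resolve_right hm₂.ne'
  have had : g 0 0 * g 1 1 = 1 := by rw [hc0] at hdet; linarith
  have ha : g 0 0 = 1 := Int.eq_one_of_mul_eq_one_right (by nlinarith) had
  have hd : g 1 1 = 1 := by rwa [ha, one_mul] at had
  rw [ha, one_mul] at hm hk
  rw [hc0, hd] at hn
  refine ⟨hm, ?_⟩
  have hdvd : n₂ ∣ k₁ - k₂ := ⟨g 0 1, by rw [hk]; ring⟩
  have := Int.eq_zero_of_abs_lt_dvd hdvd (abs_sub_lt_iff.2 ⟨by omega, by omega⟩)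
  omega

end Matrix.SpecialLinearGroup

lemma mem_slCoset {x y : Matrix (Fin 2) (Fin 2) ℝ} :
    y ∈ slCoset x ↔ ∃ γ : SpecialLinearGroup (Fin 2) ℤ,
      y = (γ : Matrix (Fin 2) (Fin 2) ℤ).map (Int.cast : ℤ → ℝ) * x :=
  Iff.rfl

lemma mem_slCoset_self (x : Matrix (Fin 2) (Fin 2) ℝ) : x ∈ slCoset x :=
  ⟨1, by simp⟩

lemma slCoset_eq_iff {x y : Matrix (Fin 2) (Fin 2) ℝ} : slCoset x = slCoset y ↔ x ∈ slCoset y := by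
  refine ⟨fun h => h ▸ mem_slCoset_self x, ?_⟩
  rintro ⟨γ, rfl⟩
  ext z
  simp only [mem_slCoset]
  constructor
  · rintro ⟨δ, rfl⟩
    exact ⟨δ * γ, by rw [Matrix.SpecialLinearGroup.coe_mul, Matrix.map_intCast_mul, mul_assoc]⟩
  · rintro ⟨δ, rfl⟩
    refine ⟨δ * γ⁻¹, ?_⟩
    rw [← mul_assoc, ← Matrix.map_intCast_mul, ← Matrix.SpecialLinearGroup.coe_mul,
      inv_mul_cancel_right]

lemma pos_of_mem_heckeIndex {L : ℕ} {p : ℕ × ℕ} (hp : p ∈ heckeIndex L) : 0 < L :=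
  Nat.pos_of_ne_zero fun hL => by simp [heckeIndex, hL] at hp

def heckeIntMat (L m k : ℕ) : Matrix (Fin 2) (Fin 2) ℤ :=
  !![(m : ℤ), k; 0, ((L / m : ℕ) : ℤ)]

lemma det_heckeIntMat {L m : ℕ} (k : ℕ) (hm : m ∣ L) : (heckeIntMat L m k).det = L := by
  rw [heckeIntMat, det_fin_two_of, mul_zero, sub_zero]
  exact_mod_cast Nat.mul_div_cancel' hm

lemma heckeMat_eq_smul_map {L m : ℕ} (k : ℕ) (hm : m ∣ L) :
    heckeMat L m k = (Real.sqrt L)⁻¹ • (heckeIntMat L m k).map (Int.cast : ℤ → ℝ) := by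
  rw [heckeMat, heckeIntMat, ← Nat.cast_div_charZero hm]
  congr 1
  ext i j
  fin_cases i <;> fin_cases j <;> simp [-Int.natCast_ediv]

lemma slCoset_heckeMat_mul_eq {L : ℕ} {p : ℕ × ℕ} (hp : p ∈ heckeIndex L)
    {a₁ a₂ : SpecialLinearGroup (Fin 2) ℤ}
    (h : ∀ i j, (L : ℤ) ∣ (a₁ : Matrix (Fin 2) (Fin 2) ℤ) i j - (a₂ : Matrix (Fin 2) (Fin 2) ℤ) i j) :
    slCoset (heckeMat L p.1 p.2 * (a₁ : Matrix (Fin 2) (Fin 2) ℤ).map (Int.cast : ℤ → ℝ)) =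
      slCoset (heckeMat L p.1 p.2 * (a₂ : Matrix (Fin 2) (Fin 2) ℤ).map (Int.cast : ℤ → ℝ)) := by
  have hdet := det_heckeIntMat p.2 hp.1
  obtain ⟨γ, hγ⟩ := SpecialLinearGroup.exists_mul_mul_eq_mul_of_dvd_sub (heckeIntMat L p.1 p.2)
    (by rw [hdet]; exact_mod_cast (pos_of_mem_heckeIndex hp).ne') a₁ a₂ (hdet ▸ h)
  refine slCoset_eq_iff.2 ⟨γ, ?_⟩
  rw [heckeMat_eq_smul_map p.2 hp.1, smul_mul, smul_mul, Matrix.mul_smul, ← mul_assoc,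
    ← Matrix.map_intCast_mul, ← Matrix.map_intCast_mul, ← Matrix.map_intCast_mul, hγ]

lemma injOn_slCoset_heckeMat (L : ℕ) :
    Set.InjOn (fun p : ℕ × ℕ => slCoset (heckeMat L p.1 p.2)) (heckeIndex L) := by
  rintro ⟨m₁, k₁⟩ hp₁ ⟨m₂, k₂⟩ hp₂ h
  have hL : 0 < L := pos_of_mem_heckeIndex hp₂
  obtain ⟨hmL₁, hm₁, hk₁⟩ : m₁ ∣ L ∧ 0 < m₁ ∧ k₁ < L / m₁ := hp₁
  obtain ⟨hmL₂, hm₂, hk₂⟩ : m₂ ∣ L ∧ 0 < m₂ ∧ k₂ < L / m₂ := hp₂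
  obtain ⟨γ, hγ⟩ := slCoset_eq_iff.1 h
  have hint : heckeIntMat L m₁ k₁ = γ * heckeIntMat L m₂ k₂ := by
    apply Matrix.map_injective (Int.cast_injective (α := ℝ))
    apply smul_right_injective _ (inv_ne_zero (Real.sqrt_pos.2 (Nat.cast_pos.2 hL)).ne')
    simpa only [Matrix.map_intCast_mul, ← Matrix.mul_smul, ← heckeMat_eq_smul_map _ hmL₁,
      ← heckeMat_eq_smul_map _ hmL₂] using hγ
  obtain ⟨hm, hk⟩ := SpecialLinearGroup.upperTriangular_eq_of_eq_mul γ (by exact_mod_cast hm₁)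
    (by exact_mod_cast hm₂) (Int.natCast_nonneg k₁) (by exact_mod_cast hk₁) (Int.natCast_nonneg k₂)
    (by exact_mod_cast hk₂) hint
  exact Prod.ext (by exact_mod_cast hm) (by exact_mod_cast hk)

theorem hecke_perm_mod_L_general (L : ℕ)
    (a₁ a₂ : Matrix.SpecialLinearGroup (Fin 2) ℤ)
    (hcong : ∀ i j, (L : ℤ) ∣ ((a₁ : Matrix (Fin 2) (Fin 2) ℤ) i j -
      (a₂ : Matrix (Fin 2) (Fin 2) ℤ) i j))
    (σ₁ σ₂ : ℕ × ℕ → ℕ × ℕ)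
    (hσ₁ : ∀ p ∈ heckeIndex L, σ₁ p ∈ heckeIndex L ∧
      slCoset (heckeMat L p.1 p.2 * (a₁ : Matrix (Fin 2) (Fin 2) ℤ).map (Int.cast : ℤ → ℝ)) =
        slCoset (heckeMat L (σ₁ p).1 (σ₁ p).2))
    (hσ₂ : ∀ p ∈ heckeIndex L, σ₂ p ∈ heckeIndex L ∧
      slCoset (heckeMat L p.1 p.2 * (a₂ : Matrix (Fin 2) (Fin 2) ℤ).map (Int.cast : ℤ → ℝ)) =
        slCoset (heckeMat L (σ₂ p).1 (σ₂ p).2)) :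
    ∀ p ∈ heckeIndex L, σ₁ p = σ₂ p := by
  intro p hp
  obtain ⟨hσ₁p, hc₁⟩ := hσ₁ p hp
  obtain ⟨hσ₂p, hc₂⟩ := hσ₂ p hp
  refine injOn_slCoset_heckeMat L hσ₁p hσ₂p ?_
  dsimp only
  rw [← hc₁, ← hc₂, slCoset_heckeMat_mul_eq hp hcong]

theorem hecke_perm_mod_L (L : ℕ) (hL : 0 < L)
    (a₁ a₂ : Matrix.SpecialLinearGroup (Fin 2) ℤ)
    (hcong : ∀ i j, (L : ℤ) ∣ ((a₁ : Matrix (Fin 2) (Fin 2) ℤ) i j -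
      (a₂ : Matrix (Fin 2) (Fin 2) ℤ) i j))
    (σ₁ σ₂ : ℕ × ℕ → ℕ × ℕ)
    (hσ₁ : ∀ p ∈ heckeIndex L, σ₁ p ∈ heckeIndex L ∧
      slCoset (heckeMat L p.1 p.2 * (a₁ : Matrix (Fin 2) (Fin 2) ℤ).map (Int.cast : ℤ → ℝ)) =
        slCoset (heckeMat L (σ₁ p).1 (σ₁ p).2))
    (hσ₂ : ∀ p ∈ heckeIndex L, σ₂ p ∈ heckeIndex L ∧
      slCoset (heckeMat L p.1 p.2 * (a₂ : Matrix (Fin 2) (Fin 2) ℤ).map (Int.cast : ℤ → ℝ)) =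
        slCoset (heckeMat L (σ₂ p).1 (σ₂ p).2)) :
    ∀ p ∈ heckeIndex L, σ₁ p = σ₂ p :=
  hecke_perm_mod_L_general L a₁ a₂ hcong σ₁ σ₂ hσ₁ hσ₂
end

section
/- Let q = MN with M | N and χ a Dirichlet character mod q, and let b be such that χ(1+kN) = e(bk/M) for all k. Then for every integer j coprime to q and every integer k, χ(j + kN) = χ(j)·e(b·j⁻¹·k/M), where j⁻¹ denotes a multiplicative inverse of j modulo M. -/
/-! If `a` inverts `j` modulo `q`, then `j + kN ≡ j (1 + akN) (mod q)`, so multiplicativity and the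
hypothesis on `χ(1 + kN)` give `χ(j + kN) = χ(j) e(bak/M)`; since `M ∣ q`, `a` also inverts `j`
modulo `M`, hence `a ≡ j⁻¹ (mod M)`, and `e(·/M)` only sees its argument modulo `M`. -/

open Complex Real

theorem Int.ModEq.of_mul_modEq_one {m a b c : ℤ} (hab : a * b ≡ 1 [ZMOD m])
    (hac : a * c ≡ 1 [ZMOD m]) : b ≡ c [ZMOD m] :=
  calc b = b * 1 := (mul_one b).symm
    _ ≡ b * (a * c) [ZMOD m] := hac.symm.mul_left b
    _ = a * b * c := by ring
    _ ≡ 1 * c [ZMOD m] := hab.mul_right c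
    _ = c := one_mul c

theorem Int.exists_mul_modEq_one_of_isCoprime {a n : ℤ} (h : IsCoprime a n) :
    ∃ b : ℤ, a * b ≡ 1 [ZMOD n] := by
  obtain ⟨u, v, huv⟩ := h
  exact ⟨u, Int.modEq_iff_dvd.2 ⟨v, by linarith⟩⟩

theorem Complex.exp_two_pi_I_mul_intCast_div_congr (M : ℕ) {x y : ℤ} (h : x ≡ y [ZMOD M]) :
    exp (2 * π * I * x / M) = exp (2 * π * I * y / M) := by
  rcases eq_or_ne M 0 with rfl | hM
  · rw [Int.natCast_zero, Int.modEq_zero_iff] at h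
    rw [h]
  obtain ⟨t, ht⟩ := h.dvd
  have hy : (y : ℂ) = x + M * t := by exact_mod_cast (sub_eq_iff_eq_add'.1 ht)
  have hM' : (M : ℂ) ≠ 0 := Nat.cast_ne_zero.2 hM
  rw [hy, mul_add, add_div, exp_add, mul_div_assoc (2 * π * I) (M * t : ℂ),
    mul_div_cancel_left₀ _ hM', mul_comm (2 * π * I) (t : ℂ), exp_int_mul_two_pi_mul_I, mul_one]

theorem map_add_eq_mul_map_one_add {F R S : Type*} [CommSemiring R] [MulOneClass S]
    [FunLike F R S] [MulHomClass F R S] (χ : F) {j a : R} (h : j * a = 1) (x : R) :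
    χ (j + x) = χ j * χ (1 + a * x) := by
  rw [← map_mul, mul_add, mul_one, ← mul_assoc, h, one_mul]

theorem char_on_progression_general_general (M N q : ℕ) (hq : q = M * N)
    (χ : DirichletCharacter ℂ q) (b : ℕ)
    (hb : ∀ k : ℤ, χ ((1 + k * N : ℤ) : ZMod q) = Complex.exp (2 * π * Complex.I * b * k / M))
    (j jinv : ℤ) (hj : IsCoprime j (q : ℤ)) (hjinv : j * jinv ≡ 1 [ZMOD (M : ℤ)]) :
    ∀ k : ℤ, χ ((j + k * N : ℤ) : ZMod q) =
      χ (j : ZMod q) * Complex.exp (2 * π * Complex.I * b * jinv * k / M) := by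
  intro k
  obtain ⟨a, hja⟩ := Int.exists_mul_modEq_one_of_isCoprime hj
  have hM : (M : ℤ) ∣ q := ⟨N, by rw [hq, Nat.cast_mul]⟩
  have ha : a ≡ jinv [ZMOD M] := (hja.of_dvd hM).of_mul_modEq_one hjinv
  have hja' : (j : ZMod q) * a = 1 := by
    exact_mod_cast (ZMod.intCast_eq_intCast_iff _ _ _).2 hja
  calc χ ((j + k * N : ℤ) : ZMod q)
      = χ (j : ZMod q) * χ ((1 + (a * k) * N : ℤ) : ZMod q) := by
        push_cast
        rw [map_add_eq_mul_map_one_add χ hja', mul_assoc]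
    _ = χ (j : ZMod q) * exp (2 * π * I * (b * a * k : ℤ) / M) := by
        rw [hb]; push_cast; ring_nf
    _ = χ (j : ZMod q) * exp (2 * π * I * b * jinv * k / M) := by
        rw [exp_two_pi_I_mul_intCast_div_congr M ((ha.mul_left b).mul_right k)]
        push_cast; ring_nf

theorem char_on_progression_general (M N q : ℕ) (hM : 0 < M) (hq : q = M * N) (hMN : M ∣ N)
    (χ : DirichletCharacter ℂ q) (b : ℕ)
    (hb : ∀ k : ℤ, χ ((1 + k * N : ℤ) : ZMod q) = Complex.exp (2 * π * Complex.I * b * k / M))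
    (j jinv : ℤ) (hj : IsCoprime j (q : ℤ)) (hjinv : j * jinv ≡ 1 [ZMOD (M : ℤ)]) :
    ∀ k : ℤ, χ ((j + k * N : ℤ) : ZMod q) =
      χ (j : ZMod q) * Complex.exp (2 * π * Complex.I * b * jinv * k / M) :=
  char_on_progression_general_general M N q hq χ b hb j jinv hj hjinv
end
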